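/- Let B be a quasi-greedy (with constant C_q) and n-order-conservative (with constant Δ_oc) basis. Then for every 0 < t ≤ 1, B is n-t-partially greedy: there is a constant C (depending only on t, C_q, Δ_oc and the scalar field) such that ‖x − P_A(x)‖ ≤ C‖x − S_n(x)‖ for every x ∈ X, every n ∈ n, and every t-greedy set A for x with |A| = n, where S_n is the n-th partial sum. -/

import Mathlib

/-!
Put `S = {0, …, n - 1}` and `y = x - S_n x`. Then `x - P_A x = y + P_{S \ A} x - P_{A \ S} y`,
and `A \ S` is `t`-greedy for `y` with threshold `a = min_{i ∈ A \ S} |e_i^*(x)|`. Everything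
reduces to the indicator bound `a ‖1_D‖ ≲ ‖y‖` for finite `D` on which `|e_i^*(y)| ≥ a`: the
coefficients of `A \ S` above `a / t` form a greedy set, the remaining ones and those of `S \ A`
are at most `a / t` and are controlled by sign sums, and order-conservativeness moves sign sums
over `S \ A`, which lies to the left of `A \ S` and has the same size, onto subsets of `A \ S`.

If only finitely many coefficients of `y` reach `a`, they form a greedy set and the indicator
bound is the truncation estimate `m ‖∑_{i ∈ G} sign(e_i^*(y)) e_i‖ ≤ 2 Cq ‖y‖` for level sets `G`.
Otherwise (coefficients need not tend to zero here), perturbing `y` slightly near the limit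
superior of its coefficients yields blocks of any size, arbitrarily far out, with controlled
sign sums, and order-conservativeness transfers this to `D`.
-/

open Finset Filter

theorem norm_sub_sum_le_add {E : Type*} [SeminormedAddCommGroup E] (x : E) (g : ℕ → E)
    (A S : Finset ℕ) :
    ‖x - ∑ i ∈ A, g i‖ ≤ ‖x - ∑ i ∈ S, g i‖ + (‖∑ i ∈ S \ A, g i‖ + ‖∑ i ∈ A \ S, g i‖) := by
  rw [show x - ∑ i ∈ A, g i = (x - ∑ i ∈ S, g i) + (∑ i ∈ S \ A, g i - ∑ i ∈ A \ S, g i) by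
    rw [sum_sdiff_sub_sum_sdiff]; abel]
  exact (norm_add_le _ _).trans (by gcongr; exact norm_sub_le _ _)

theorem abs_div_abs_self {r : ℝ} (hr : r ≠ 0) : |(r / |r|)| = 1 := by
  rw [abs_div, abs_abs, div_self (abs_ne_zero.mpr hr)]

section GreedyBases

variable {X : Type*} [NormedAddCommGroup X] [NormedSpace ℝ X]

def IsBiorthogonal (e : ℕ → X) (f : ℕ → X →L[ℝ] ℝ) : Prop :=
  ∀ i j, f i (e j) = if i = j then 1 else 0

def IsGreedySet (f : ℕ → X →L[ℝ] ℝ) (x : X) (A : Finset ℕ) : Prop :=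
  ∀ i ∈ A, ∀ j ∉ A, |f j x| ≤ |f i x|

def IsQuasiGreedy (e : ℕ → X) (f : ℕ → X →L[ℝ] ℝ) (Cq : ℝ) : Prop :=
  ∀ (x : X) (A : Finset ℕ), IsGreedySet f x A → ‖∑ i ∈ A, f i x • e i‖ ≤ Cq * ‖x‖

def IsOrderConservative (e : ℕ → X) (nseq : ℕ → ℕ) (Δ : ℝ) : Prop :=
  ∀ A B : Finset ℕ, A.card = B.card → (∃ k, A ⊆ range (nseq k) ∧ ∀ j ∈ B, nseq k ≤ j) →
    ‖∑ i ∈ A, e i‖ ≤ Δ * ‖∑ i ∈ B, e i‖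

variable {e : ℕ → X} {f : ℕ → X →L[ℝ] ℝ} {Cq : ℝ}

theorem IsBiorthogonal.apply_sum_smul (hef : IsBiorthogonal e f) (Z : Finset ℕ) (c : ℕ → ℝ)
    (j : ℕ) : f j (∑ i ∈ Z, c i • e i) = if j ∈ Z then c j else 0 := by
  simp [hef j]

theorem IsBiorthogonal.apply_sub_sum_smul (hef : IsBiorthogonal e f) (x : X) (S : Finset ℕ)
    (j : ℕ) : f j (x - ∑ i ∈ S, f i x • e i) = if j ∈ S then 0 else f j x := by
  by_cases hj : j ∈ S <;> simp [hef.apply_sum_smul, hj]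

theorem isGreedySet_of_level {v : X} {G : Finset ℕ} {m : ℝ} (hG : ∀ i ∈ G, m ≤ |f i v|)
    (hout : ∀ j ∉ G, |f j v| ≤ m) : IsGreedySet f v G :=
  fun i hi j hj => (hout j hj).trans (hG i hi)

theorem IsQuasiGreedy.mul_norm_nonneg (hQG : IsQuasiGreedy e f Cq) (v : X) : 0 ≤ Cq * ‖v‖ := by
  simpa using hQG v ∅ (by simp [IsGreedySet])

/-- Peeling off the smallest coefficient writes the left-hand side as a convex combination of
`P_G v` and the same expression at a higher level on a smaller set. -/
theorem IsQuasiGreedy.norm_sum_one_sub_div_smul_le (hQG : IsQuasiGreedy e f Cq) (v : X)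
    (G : Finset ℕ) : ∀ μ : ℝ, 0 < μ → (∀ i ∈ G, μ ≤ |f i v|) → (∀ j ∉ G, |f j v| ≤ μ) →
      ‖∑ i ∈ G, ((1 - μ / |f i v|) * f i v) • e i‖ ≤ Cq * ‖v‖ := by
  induction G using Finset.strongInduction with
  | _ G ih =>
    intro μ hμ hG hout
    rcases G.eq_empty_or_nonempty with rfl | hne
    · simpa using hQG.mul_norm_nonneg v
    obtain ⟨j₀, hj₀, hmin⟩ := G.exists_min_image (fun i => |f i v|) hne
    set m := |f j₀ v|
    have hμm : μ ≤ m := hG j₀ hj₀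
    have hm : 0 < m := hμ.trans_le hμm
    have hsplit : ∑ i ∈ G, ((1 - μ / |f i v|) * f i v) • e i
        = (μ / m) • ∑ i ∈ G.erase j₀, ((1 - m / |f i v|) * f i v) • e i
          + (1 - μ / m) • ∑ i ∈ G, f i v • e i := by
      rw [sum_erase _ (by simp [m, div_self hm.ne'])]
      simp only [smul_sum, smul_smul, ← sum_add_distrib, ← add_smul]
      refine sum_congr rfl fun i _ => ?_
      congr 1
      field_simp [hm.ne']
      ring
    have hhigher : ‖∑ i ∈ G.erase j₀, ((1 - m / |f i v|) * f i v) • e i‖ ≤ Cq * ‖v‖ := by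
      refine ih _ (erase_ssubset hj₀) m hm (fun i hi => hmin i (mem_of_mem_erase hi)) ?_
      intro j hj
      by_cases hjG : j ∈ G
      · rw [show j = j₀ by by_contra h; exact hj (mem_erase.mpr ⟨h, hjG⟩)]
      · exact (hout j hjG).trans hμm
    have hPG := hQG v G (isGreedySet_of_level hG hout)
    have hw : 0 ≤ μ / m := by positivity
    have hw' : 0 ≤ 1 - μ / m := by rw [sub_nonneg, div_le_one hm]; exact hμm
    calc _ ≤ (μ / m) * (Cq * ‖v‖) + (1 - μ / m) * (Cq * ‖v‖) := by
          rw [hsplit]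
          refine (norm_add_le _ _).trans (add_le_add ?_ ?_) <;>
            rw [norm_smul, Real.norm_of_nonneg (by assumption)] <;> gcongr
      _ = Cq * ‖v‖ := by ring

theorem IsQuasiGreedy.mul_norm_sum_sign_le (hQG : IsQuasiGreedy e f Cq) {v : X}
    {G : Finset ℕ} {m : ℝ} (hm : 0 < m) (hG : ∀ i ∈ G, m ≤ |f i v|)
    (hout : ∀ j ∉ G, |f j v| ≤ m) :
    m * ‖∑ i ∈ G, (f i v / |f i v|) • e i‖ ≤ 2 * Cq * ‖v‖ := by
  have hid : m • ∑ i ∈ G, (f i v / |f i v|) • e i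
      = ∑ i ∈ G, f i v • e i - ∑ i ∈ G, ((1 - m / |f i v|) * f i v) • e i := by
    rw [smul_sum, ← sum_sub_distrib]
    refine sum_congr rfl fun i hi => ?_
    have : |f i v| ≠ 0 := (hm.trans_le (hG i hi)).ne'
    rw [smul_smul, ← sub_smul]
    congr 1
    field_simp
    ring
  calc m * ‖∑ i ∈ G, (f i v / |f i v|) • e i‖
      = ‖m • ∑ i ∈ G, (f i v / |f i v|) • e i‖ := by rw [norm_smul, Real.norm_of_nonneg hm.le]
    _ ≤ Cq * ‖v‖ + Cq * ‖v‖ := by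
      rw [hid]
      exact (norm_sub_le _ _).trans (add_le_add (hQG v G (isGreedySet_of_level hG hout))
        (hQG.norm_sum_one_sub_div_smul_le v G m hm hG hout))
    _ = 2 * Cq * ‖v‖ := by ring

/-- Every subset of `Z` is a greedy set for `∑ i ∈ Z, ε i • e i`, whose coefficients have
modulus `1` on `Z` and vanish elsewhere. -/
theorem IsQuasiGreedy.norm_sum_smul_le_of_subset (hef : IsBiorthogonal e f)
    (hQG : IsQuasiGreedy e f Cq) {D Z : Finset ℕ} (hDZ : D ⊆ Z) {ε : ℕ → ℝ}
    (hε : ∀ i ∈ Z, |ε i| = 1) : ‖∑ i ∈ D, ε i • e i‖ ≤ Cq * ‖∑ i ∈ Z, ε i • e i‖ := by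
  have hcoord := hef.apply_sum_smul Z ε
  have hgreedy : IsGreedySet f (∑ i ∈ Z, ε i • e i) D := by
    intro i hi j _
    rw [hcoord, hcoord, if_pos (hDZ hi), hε i (hDZ hi)]
    split_ifs with hj
    · exact (hε j hj).le
    · simp
  convert hQG _ D hgreedy using 2
  exact sum_congr rfl fun i hi => by rw [hcoord, if_pos (hDZ hi)]

/-- Split `E` according to whether `ε'` agrees with `ε` or with `-ε`. -/
theorem IsQuasiGreedy.norm_sum_signs_le (hef : IsBiorthogonal e f)
    (hQG : IsQuasiGreedy e f Cq) {E Z : Finset ℕ} (hEZ : E ⊆ Z) {ε ε' : ℕ → ℝ}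
    (hε : ∀ i ∈ Z, |ε i| = 1) (hε' : ∀ i ∈ E, |ε' i| = 1) :
    ‖∑ i ∈ E, ε' i • e i‖ ≤ 2 * Cq * ‖∑ i ∈ Z, ε i • e i‖ := by
  have hneg : ∀ i ∈ E.filter (fun i => ε' i ≠ ε i), ε' i • e i = -(ε i • e i) := by
    intro i hi
    obtain ⟨hiE, hne⟩ := mem_filter.mp hi
    have := abs_eq_abs.mp ((hε' i hiE).trans (hε i (hEZ hiE)).symm)
    rw [this.resolve_left hne, neg_smul]
  have hsplit : ∑ i ∈ E, ε' i • e i = ∑ i ∈ E.filter (fun i => ε' i = ε i), ε i • e i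
      - ∑ i ∈ E.filter (fun i => ε' i ≠ ε i), ε i • e i := by
    rw [← sum_filter_add_sum_filter_not E (fun i => ε' i = ε i), sum_congr rfl hneg,
      sum_neg_distrib, sub_eq_add_neg]
    congr 1
    exact sum_congr rfl fun i hi => by rw [(mem_filter.mp hi).2]
  rw [hsplit, two_mul, add_mul]
  exact (norm_sub_le _ _).trans (add_le_add
    (hQG.norm_sum_smul_le_of_subset hef ((filter_subset _ _).trans hEZ) hε)
    (hQG.norm_sum_smul_le_of_subset hef ((filter_subset _ _).trans hEZ) hε))

theorem IsQuasiGreedy.norm_sum_signs_le_indicator (hef : IsBiorthogonal e f)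
    (hQG : IsQuasiGreedy e f Cq) {E : Finset ℕ} {ε : ℕ → ℝ} (hε : ∀ i ∈ E, |ε i| = 1) :
    ‖∑ i ∈ E, ε i • e i‖ ≤ 2 * Cq * ‖∑ i ∈ E, e i‖ := by
  simpa using hQG.norm_sum_signs_le hef subset_rfl (ε := fun _ => 1) (by simp) hε

/-- Peel off the coefficient of smallest modulus: `b = β σ + b'` with `σ` a sign vector on `E`
and `b'` vanishing at that index. -/
theorem norm_sum_smul_le_mul_of_norm_sum_signs_le (E : Finset ℕ) :
    ∀ (b : ℕ → ℝ) (M Γ : ℝ), 0 ≤ M → (∀ j ∈ E, |b j| ≤ M) →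
      (∀ E' ⊆ E, ∀ ε : ℕ → ℝ, (∀ i ∈ E', |ε i| = 1) → ‖∑ i ∈ E', ε i • e i‖ ≤ Γ) →
      ‖∑ j ∈ E, b j • e j‖ ≤ M * Γ := by
  induction E using Finset.strongInduction with
  | _ E ih =>
    intro b M Γ hM hb hΓ
    rcases E.eq_empty_or_nonempty with rfl | hne
    · simpa using mul_nonneg hM (by simpa using hΓ ∅ subset_rfl 0 (by simp))
    obtain ⟨j₀, hj₀, hmin⟩ := E.exists_min_image (fun j => |b j|) hne
    set β := |b j₀|
    set σ : ℕ → ℝ := fun j => if 0 ≤ b j then 1 else -1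
    have hσ : ∀ j, |σ j| = 1 := fun j => by by_cases h : 0 ≤ b j <;> simp [σ, h]
    have hbσ : ∀ j, b j = |b j| * σ j := fun j => by
      by_cases h : 0 ≤ b j
      · simp [σ, h, abs_of_nonneg h]
      · simp [σ, h, abs_of_neg (not_le.mp h)]
    set b' : ℕ → ℝ := fun j => b j - β * σ j
    have hb' : ∀ j ∈ E, |b' j| = |b j| - β := fun j hj => by
      rw [show b' j = (|b j| - β) * σ j by linear_combination hbσ j, abs_mul, hσ, mul_one,
        abs_of_nonneg (sub_nonneg.mpr (hmin j hj))]
    have hsplit : ∑ j ∈ E, b j • e j = β • ∑ j ∈ E, σ j • e j + ∑ j ∈ E.erase j₀, b' j • e j := by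
      rw [sum_erase _ (by rw [abs_eq_zero.mp ((hb' j₀ hj₀).trans (sub_self _)), zero_smul]),
        smul_sum, ← sum_add_distrib]
      exact sum_congr rfl fun j _ => by rw [smul_smul, ← add_smul]; simp [b']
    have hrest : ‖∑ j ∈ E.erase j₀, b' j • e j‖ ≤ (M - β) * Γ :=
      ih _ (erase_ssubset hj₀) b' (M - β) Γ (sub_nonneg.mpr (hb j₀ hj₀))
        (fun j hj => by rw [hb' j (mem_of_mem_erase hj)]; linarith [hb j (mem_of_mem_erase hj)])
        (fun E' hE' => hΓ E' (hE'.trans (erase_subset _ _)))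
    calc ‖∑ j ∈ E, b j • e j‖ ≤ β * Γ + (M - β) * Γ := by
          rw [hsplit]
          refine (norm_add_le _ _).trans (add_le_add ?_ hrest)
          rw [norm_smul, Real.norm_of_nonneg (abs_nonneg _)]
          exact mul_le_mul_of_nonneg_left (hΓ E subset_rfl σ fun i _ => hσ i) (abs_nonneg _)
      _ = M * Γ := by ring

theorem norm_sum_smul_le_of_mul_norm_sum_signs_le {E : Finset ℕ} {b : ℕ → ℝ} {M Γ : ℝ}
    (hM : 0 ≤ M) (hb : ∀ j ∈ E, |b j| ≤ M)
    (hΓ : ∀ E' ⊆ E, ∀ ε : ℕ → ℝ, (∀ i ∈ E', |ε i| = 1) → M * ‖∑ i ∈ E', ε i • e i‖ ≤ Γ) :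
    ‖∑ j ∈ E, b j • e j‖ ≤ Γ := by
  rcases hM.eq_or_lt with rfl | hM
  · have hb0 : ∀ j ∈ E, b j • e j = 0 := fun j hj => by
      rw [abs_nonpos_iff.mp (hb j hj), zero_smul]
    simpa [sum_eq_zero hb0] using hΓ ∅ (empty_subset _) 0 (by simp)
  · calc ‖∑ j ∈ E, b j • e j‖ ≤ M * (Γ / M) :=
          norm_sum_smul_le_mul_of_norm_sum_signs_le E b M _ hM.le hb fun E' hE' ε hε =>
            (le_div_iff₀' hM).mpr (hΓ E' hE' ε hε)
      _ = Γ := mul_div_cancel₀ Γ hM.ne'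

/-- Moving the coefficients on `F` outwards by `δ` turns `H ∪ F` into a level set of the
perturbed vector, to which the truncation bound applies. -/
theorem IsQuasiGreedy.mul_norm_sum_sign_le_of_perturb (hef : IsBiorthogonal e f)
    (hQG : IsQuasiGreedy e f Cq) (hCq : 0 ≤ Cq) {y : X} {H F : Finset ℕ} {m δ : ℝ}
    (hm : 0 < m) (hδ : 0 ≤ δ) (hHF : Disjoint H F) (hH : ∀ i ∈ H, m ≤ |f i y|)
    (hF : ∀ i ∈ F, m ≤ |f i y| + δ) (hF0 : ∀ i ∈ F, f i y ≠ 0)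
    (hout : ∀ j ∉ H ∪ F, |f j y| ≤ m) :
    m * ‖∑ i ∈ F, (f i y / |f i y|) • e i‖ ≤
      4 * Cq ^ 2 * (‖y‖ + δ * ‖∑ i ∈ F, (f i y / |f i y|) • e i‖) := by
  set u := ∑ i ∈ F, (f i y / |f i y|) • e i
  set z := y + δ • u
  have hz : ∀ j, f j z = f j y + δ * if j ∈ F then f j y / |f j y| else 0 := fun j => by
    simp only [z, u, map_add, map_smul, hef.apply_sum_smul, smul_eq_mul]
  have hzF : ∀ j ∈ F, |f j z| = |f j y| + δ := fun j hj => by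
    have hpos : 0 < |f j y| := abs_pos.mpr (hF0 j hj)
    rw [hz, if_pos hj, show f j y + δ * (f j y / |f j y|) = f j y * ((|f j y| + δ) / |f j y|) by
      field_simp, abs_mul, abs_of_pos (by positivity : 0 < (|f j y| + δ) / |f j y|)]
    field_simp
  have hzout : ∀ j ∉ F, f j z = f j y := fun j hj => by rw [hz, if_neg hj, mul_zero, add_zero]
  have hzG : ∀ i ∈ H ∪ F, m ≤ |f i z| := fun i hi => by
    rcases mem_union.mp hi with hiH | hiF
    · rw [hzout i (disjoint_left.mp hHF hiH)]; exact hH i hiH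
    · rw [hzF i hiF]; exact hF i hiF
  have hzout' : ∀ j ∉ H ∪ F, |f j z| ≤ m := fun j hj => by
    rw [hzout j fun h => hj (mem_union_right _ h)]; exact hout j hj
  have htrunc := hQG.mul_norm_sum_sign_le hm hzG hzout'
  have hu : ‖u‖ ≤ 2 * Cq * ‖∑ i ∈ H ∪ F, (f i z / |f i z|) • e i‖ :=
    hQG.norm_sum_signs_le hef subset_union_right
      (fun i hi => abs_div_abs_self (abs_pos.mp (hm.trans_le (hzG i hi))))
      (fun i hi => abs_div_abs_self (hF0 i hi))
  have hz_norm : ‖z‖ ≤ ‖y‖ + δ * ‖u‖ := by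
    refine (norm_add_le _ _).trans_eq ?_
    rw [norm_smul, Real.norm_of_nonneg hδ]
  calc m * ‖u‖ ≤ 2 * Cq * (m * ‖∑ i ∈ H ∪ F, (f i z / |f i z|) • e i‖) := by
        nlinarith [mul_le_mul_of_nonneg_left hu hm.le]
    _ ≤ 2 * Cq * (2 * Cq * ‖z‖) := by gcongr
    _ ≤ 4 * Cq ^ 2 * (‖y‖ + δ * ‖u‖) := by
        nlinarith [mul_le_mul_of_nonneg_left hz_norm (sq_nonneg Cq)]

/-- With `s` the limit superior of the coefficients of `y`, take `F` among the infinitely many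
indices with coefficient in `(s - δ, s + δ)`, beyond the finitely many above `s + δ`, and
perturb by `2 δ`. As `16 Cq² δ = s - δ`, the perturbation term is absorbed by the left-hand
side. -/
theorem IsQuasiGreedy.exists_far_mul_norm_sum_sign_le (hef : IsBiorthogonal e f)
    (hQG : IsQuasiGreedy e f Cq) (hCq : 0 ≤ Cq) {y : X}
    (hbdd : IsBoundedUnder (· ≤ ·) atTop fun j => |f j y|)
    (hs : 0 < limsup (fun j => |f j y|) atTop) (N n : ℕ) :
    ∃ F : Finset ℕ, F.card = n ∧ (∀ j ∈ F, N ≤ j) ∧ (∀ j ∈ F, f j y ≠ 0) ∧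
      limsup (fun j => |f j y|) atTop * ‖∑ i ∈ F, (f i y / |f i y|) • e i‖ ≤ 8 * Cq ^ 2 * ‖y‖ := by
  set s := limsup (fun j => |f j y|) atTop
  set δ := s / (16 * Cq ^ 2 + 1)
  have hδ : 0 < δ := by positivity
  have hδs : δ * (16 * Cq ^ 2 + 1) = s := div_mul_cancel₀ s (by positivity)
  have hHfin : {j | ¬ |f j y| < s + δ}.Finite := by
    rw [← eventually_cofinite, Nat.cofinite_eq_atTop]
    exact eventually_lt_of_limsup_lt (by linarith) hbdd
  have hW : {j | s - δ < |f j y|}.Infinite :=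
    Nat.frequently_atTop_iff_infinite.mp <| frequently_lt_of_lt_limsup
      (isCoboundedUnder_le_of_le atTop fun j => abs_nonneg _) (by linarith)
  obtain ⟨F, hFW, hFcard⟩ :=
    (hW.sdiff (hHfin.union (range N).finite_toSet)).exists_subset_card_eq n
  have hFmem : ∀ j ∈ F, s - δ < |f j y| ∧ N ≤ j := fun j hj => by
    have := hFW hj
    simp only [Set.mem_sdiff, Set.mem_union, mem_coe, mem_range, not_or, not_lt] at this
    exact ⟨this.1, this.2.2⟩
  have hF0 : ∀ j ∈ F, f j y ≠ 0 := fun j hj =>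
    abs_pos.mp (lt_of_le_of_lt (by nlinarith) (hFmem j hj).1)
  have hpert := hQG.mul_norm_sum_sign_le_of_perturb hef hCq (H := hHfin.toFinset)
    (m := s + δ) (δ := 2 * δ) (by positivity) (by positivity)
    (disjoint_left.mpr fun j hjH hjF => (hFW hjF).2 (Or.inl (by simpa using hjH)))
    (fun i hi => not_lt.mp (by simpa using hi))
    (fun i hi => by linarith [(hFmem i hi).1]) hF0
    (fun j hj => not_lt.mp fun h => hj (mem_union_left _ (by simpa using h.le)))
  refine ⟨F, hFcard, fun j hj => (hFmem j hj).2, hF0, ?_⟩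
  nlinarith [mul_nonneg hδ.le (norm_nonneg (∑ i ∈ F, (f i y / |f i y|) • e i))]

theorem IsQuasiGreedy.mul_norm_sum_le_of_finite (hef : IsBiorthogonal e f)
    (hQG : IsQuasiGreedy e f Cq) (hCq : 0 ≤ Cq) {y : X} {a : ℝ} (ha : 0 < a)
    (hfin : {j | a ≤ |f j y|}.Finite) {D : Finset ℕ} (hD : ∀ i ∈ D, a ≤ |f i y|) :
    a * ‖∑ i ∈ D, e i‖ ≤ 4 * Cq ^ 2 * ‖y‖ := by
  have hG : ∀ i ∈ hfin.toFinset, a ≤ |f i y| := fun i hi => by simpa using hi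
  have htrunc := hQG.mul_norm_sum_sign_le ha hG fun j hj => le_of_lt (by simpa using hj)
  have hDG : ‖∑ i ∈ D, e i‖ ≤ 2 * Cq * ‖∑ i ∈ hfin.toFinset, (f i y / |f i y|) • e i‖ := by
    simpa using hQG.norm_sum_signs_le hef (fun i hi => by simpa using hD i hi) (ε' := fun _ => 1)
      (fun i hi => abs_div_abs_self (abs_pos.mp (ha.trans_le (hG i hi)))) (by simp)
  nlinarith [mul_le_mul_of_nonneg_left hDG ha.le]

theorem IsQuasiGreedy.mul_norm_sum_le_of_infinite (hef : IsBiorthogonal e f)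
    (hQG : IsQuasiGreedy e f Cq) (hCq : 0 ≤ Cq) {nseq : ℕ → ℕ} {Δ : ℝ}
    (hOC : IsOrderConservative e nseq Δ) (hΔ : 0 ≤ Δ) (hn : Tendsto nseq atTop atTop) {y : X}
    (hbdd : IsBoundedUnder (· ≤ ·) atTop fun j => |f j y|) {a : ℝ} (ha : 0 < a)
    (hinf : {j | a ≤ |f j y|}.Infinite) (D : Finset ℕ) :
    a * ‖∑ i ∈ D, e i‖ ≤ 16 * Cq ^ 3 * Δ * ‖y‖ := by
  have has : a ≤ limsup (fun j => |f j y|) atTop :=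
    le_limsup_of_frequently_le (Nat.frequently_atTop_iff_infinite.mpr hinf) hbdd
  obtain ⟨k, hk⟩ := (hn.eventually_ge_atTop (D.sup id + 1)).exists
  obtain ⟨F, hFcard, hFk, hF0, hFbound⟩ :=
    hQG.exists_far_mul_norm_sum_sign_le hef hCq hbdd (ha.trans_le has) (nseq k) D.card
  have hDF : ‖∑ i ∈ D, e i‖ ≤ Δ * ‖∑ i ∈ F, e i‖ :=
    hOC D F hFcard.symm ⟨k, fun i hi => mem_range.mpr (by
      have := le_sup (f := id) hi; simp only [id] at this; omega), hFk⟩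
  have hF : ‖∑ i ∈ F, e i‖ ≤ 2 * Cq * ‖∑ i ∈ F, (f i y / |f i y|) • e i‖ := by
    simpa using hQG.norm_sum_signs_le hef subset_rfl (ε' := fun _ => 1)
      (fun i hi => abs_div_abs_self (hF0 i hi)) (by simp)
  calc a * ‖∑ i ∈ D, e i‖
      ≤ limsup (fun j => |f j y|) atTop * (Δ * (2 * Cq * ‖∑ i ∈ F, (f i y / |f i y|) • e i‖)) :=
        mul_le_mul has (hDF.trans (by gcongr)) (norm_nonneg _) (ha.le.trans has)
    _ = 2 * Cq * Δ *
          (limsup (fun j => |f j y|) atTop * ‖∑ i ∈ F, (f i y / |f i y|) • e i‖) := by ring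
    _ ≤ 2 * Cq * Δ * (8 * Cq ^ 2 * ‖y‖) := by gcongr
    _ = 16 * Cq ^ 3 * Δ * ‖y‖ := by ring

theorem IsQuasiGreedy.mul_norm_sum_le_of_le_abs (hef : IsBiorthogonal e f)
    (hQG : IsQuasiGreedy e f Cq) (hCq : 0 ≤ Cq) {nseq : ℕ → ℕ} {Δ : ℝ}
    (hOC : IsOrderConservative e nseq Δ) (hΔ : 0 ≤ Δ) (hn : Tendsto nseq atTop atTop) {y : X}
    (hbdd : IsBoundedUnder (· ≤ ·) atTop fun j => |f j y|) {a : ℝ} {D : Finset ℕ}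
    (hD : ∀ i ∈ D, a ≤ |f i y|) :
    a * ‖∑ i ∈ D, e i‖ ≤ (4 * Cq ^ 2 + 16 * Cq ^ 3 * Δ) * ‖y‖ := by
  rcases le_or_gt a 0 with ha | ha
  · exact (mul_nonpos_of_nonpos_of_nonneg ha (norm_nonneg _)).trans (by positivity)
  by_cases hfin : {j | a ≤ |f j y|}.Finite
  · nlinarith [hQG.mul_norm_sum_le_of_finite hef hCq ha hfin hD,
      mul_nonneg (mul_nonneg (pow_nonneg hCq 3) hΔ) (norm_nonneg y)]
  · nlinarith [hQG.mul_norm_sum_le_of_infinite hef hCq hOC hΔ hn hbdd ha hfin D,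
      mul_nonneg (sq_nonneg Cq) (norm_nonneg y)]

theorem IsQuasiGreedy.norm_proj_le_of_threshold (hef : IsBiorthogonal e f)
    (hQG : IsQuasiGreedy e f Cq) (hCq : 0 ≤ Cq) {y : X} {B : Finset ℕ} {a t R : ℝ}
    (ht : 0 < t) (ha : 0 ≤ a) (hout : ∀ j ∉ B, t * |f j y| ≤ a)
    (hR : ∀ D ⊆ B, a * ‖∑ i ∈ D, e i‖ ≤ R) :
    ‖∑ i ∈ B, f i y • e i‖ ≤ Cq * ‖y‖ + 2 * Cq * R / t := by
  have hgreedy : IsGreedySet f y (B.filter fun i => a / t < |f i y|) := by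
    intro i hi j hj
    refine le_of_lt (lt_of_le_of_lt ?_ (mem_filter.mp hi).2)
    by_cases hjB : j ∈ B
    · exact not_lt.mp fun h => hj (mem_filter.mpr ⟨hjB, h⟩)
    · exact (le_div_iff₀' ht).mpr (hout j hjB)
  have hsmall : ‖∑ i ∈ B.filter (fun i => ¬ a / t < |f i y|), f i y • e i‖ ≤ 2 * Cq * R / t := by
    refine norm_sum_smul_le_of_mul_norm_sum_signs_le (by positivity)
      (fun j hj => not_lt.mp (mem_filter.mp hj).2) fun E hE ε hε => ?_
    calc a / t * ‖∑ i ∈ E, ε i • e i‖ ≤ a / t * (2 * Cq * ‖∑ i ∈ E, e i‖) := by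
          gcongr; exact hQG.norm_sum_signs_le_indicator hef hε
      _ = 2 * Cq / t * (a * ‖∑ i ∈ E, e i‖) := by ring
      _ ≤ 2 * Cq / t * R := by gcongr; exact hR E (hE.trans (filter_subset _ _))
      _ = 2 * Cq * R / t := by ring
  rw [← sum_filter_add_sum_filter_not B fun i => a / t < |f i y|]
  exact (norm_add_le _ _).trans (add_le_add (hQG y _ hgreedy) hsmall)

theorem IsOrderConservative.norm_sum_smul_le_of_threshold (hef : IsBiorthogonal e f)
    (hQG : IsQuasiGreedy e f Cq) (hCq : 0 ≤ Cq) {nseq : ℕ → ℕ} {Δ : ℝ}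
    (hOC : IsOrderConservative e nseq Δ) (hΔ : 0 ≤ Δ) {S B : Finset ℕ} {k : ℕ}
    (hS : S ⊆ range (nseq k)) (hB : ∀ j ∈ B, nseq k ≤ j) (hcard : S.card ≤ B.card)
    {b : ℕ → ℝ} {a t R : ℝ} (ht : 0 < t) (ha : 0 ≤ a) (hb : ∀ j ∈ S, t * |b j| ≤ a)
    (hR : ∀ D ⊆ B, a * ‖∑ i ∈ D, e i‖ ≤ R) :
    ‖∑ j ∈ S, b j • e j‖ ≤ 2 * Cq * Δ * R / t := by
  refine norm_sum_smul_le_of_mul_norm_sum_signs_le (by positivity)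
    (fun j hj => (le_div_iff₀' ht).mpr (hb j hj)) fun E hE ε hε => ?_
  obtain ⟨F, hFB, hFcard⟩ := exists_subset_card_eq ((card_le_card hE).trans hcard)
  have hEF : ‖∑ i ∈ E, e i‖ ≤ Δ * ‖∑ i ∈ F, e i‖ :=
    hOC E F hFcard.symm ⟨k, hE.trans hS, fun j hj => hB j (hFB hj)⟩
  calc a / t * ‖∑ i ∈ E, ε i • e i‖ ≤ a / t * (2 * Cq * (Δ * ‖∑ i ∈ F, e i‖)) := by
        gcongr; exact (hQG.norm_sum_signs_le_indicator hef hε).trans (by gcongr)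
    _ = 2 * Cq * Δ / t * (a * ‖∑ i ∈ F, e i‖) := by ring
    _ ≤ 2 * Cq * Δ / t * R := by gcongr; exact hR F hFB
    _ = 2 * Cq * Δ * R / t := by ring

theorem IsQuasiGreedy.norm_sub_proj_le (hef : IsBiorthogonal e f) (hQG : IsQuasiGreedy e f Cq)
    (hCq : 0 ≤ Cq) {nseq : ℕ → ℕ} {Δ : ℝ} (hOC : IsOrderConservative e nseq Δ) (hΔ : 0 ≤ Δ)
    (hn : Tendsto nseq atTop atTop) {t : ℝ} (ht : 0 < t) {x : X} {k : ℕ} {A : Finset ℕ}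
    (hcard : A.card = nseq k) (hA : ∀ i ∈ A, ∀ j ∉ A, t * |f j x| ≤ |f i x|) :
    ‖x - ∑ i ∈ A, f i x • e i‖ ≤ (1 + Cq + 2 * Cq * (4 * Cq ^ 2 + 16 * Cq ^ 3 * Δ) * (1 + Δ) / t)
      * ‖x - ∑ i ∈ range (nseq k), f i x • e i‖ := by
  set K := 4 * Cq ^ 2 + 16 * Cq ^ 3 * Δ
  set S := range (nseq k)
  set y := x - ∑ i ∈ S, f i x • e i
  rcases (A \ S).eq_empty_or_nonempty with hAS | hAS
  · rw [eq_of_subset_of_card_le (sdiff_eq_empty_iff_subset.mp hAS) (by simp [S, hcard])]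
    nlinarith [norm_nonneg y, (by positivity : 0 ≤ 2 * Cq * K * (1 + Δ) / t)]
  obtain ⟨i₀, hi₀, hmin⟩ := (A \ S).exists_min_image (fun i => |f i x|) hAS
  set a := |f i₀ x|
  have hyAS : ∀ i ∈ A \ S, f i y = f i x := fun i hi => by
    rw [hef.apply_sub_sum_smul, if_neg (mem_sdiff.mp hi).2]
  have hout : ∀ j ∉ A \ S, t * |f j y| ≤ a := fun j hj => by
    rw [hef.apply_sub_sum_smul]
    split_ifs with hjS
    · simpa using abs_nonneg _
    · exact hA i₀ (mem_sdiff.mp hi₀).1 j fun hjA => hj (mem_sdiff.mpr ⟨hjA, hjS⟩)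
  have hbdd : IsBoundedUnder (· ≤ ·) atTop fun j => |f j y| :=
    isBoundedUnder_of_eventually_le (a := a / t) <| Nat.cofinite_eq_atTop ▸
      (A \ S).eventually_cofinite_notMem.mono fun j hj => (le_div_iff₀' ht).mpr (hout j hj)
  have hR : ∀ D ⊆ A \ S, a * ‖∑ i ∈ D, e i‖ ≤ K * ‖y‖ := fun D hD =>
    hQG.mul_norm_sum_le_of_le_abs hef hCq hOC hΔ hn hbdd
      fun i hi => by rw [hyAS i (hD hi)]; exact hmin i (hD hi)
  have hASnorm := hQG.norm_proj_le_of_threshold hef hCq ht (abs_nonneg _) hout hR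
  rw [sum_congr rfl fun i hi => (congrArg (· • e i) (hyAS i hi) :)] at hASnorm
  have hSAnorm := hOC.norm_sum_smul_le_of_threshold hef hQG hCq hΔ sdiff_subset
    (fun j hj => by simpa [S] using (mem_sdiff.mp hj).2) (card_sdiff_comm (by simp [hcard])).le
    ht (abs_nonneg _) (fun j hj => hA i₀ (mem_sdiff.mp hi₀).1 j (mem_sdiff.mp hj).2) hR
  calc _ ≤ ‖y‖ + (‖∑ i ∈ S \ A, f i x • e i‖ + ‖∑ i ∈ A \ S, f i x • e i‖) :=
        norm_sub_sum_le_add x _ A S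
    _ ≤ ‖y‖ + (2 * Cq * Δ * (K * ‖y‖) / t + (Cq * ‖y‖ + 2 * Cq * (K * ‖y‖) / t)) := by gcongr
    _ = _ := by ring

end GreedyBases

theorem stmt16_general (t Cq Δoc : ℝ) (ht0 : 0 < t) (hCq : 0 < Cq) (hΔoc : 0 < Δoc) :
    ∃ C : ℝ, 0 < C ∧
      ∀ (X : Type) [NormedAddCommGroup X] [NormedSpace ℝ X],
        ∀ (e : ℕ → X) (f : ℕ → X →L[ℝ] ℝ),
          (∀ i j, f i (e j) = if i = j then (1 : ℝ) else 0) →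
          -- quasi-greedy with constant Cq
          (∀ (x : X) (A : Finset ℕ),
            (∀ i ∈ A, ∀ j ∉ A, |f j x| ≤ |f i x|) →
            ‖∑ i ∈ A, f i x • e i‖ ≤ Cq * ‖x‖) →
          ∀ (nseq : ℕ → ℕ), StrictMono nseq → 0 < nseq 0 →
            -- 𝐧-order-conservative with constant Δoc
            (∀ (A B : Finset ℕ), A.card = B.card →
              (∃ k, A ⊆ Finset.range (nseq k) ∧ ∀ j ∈ B, nseq k ≤ j) →
              ‖∑ i ∈ A, e i‖ ≤ Δoc * ‖∑ i ∈ B, e i‖) →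
            ∀ (x : X) (k : ℕ) (A : Finset ℕ), A.card = nseq k →
              (∀ i ∈ A, ∀ j ∉ A, t * |f j x| ≤ |f i x|) →
              ‖x - ∑ i ∈ A, f i x • e i‖ ≤
                C * ‖x - ∑ i ∈ Finset.range (nseq k), f i x • e i‖ := by
  refine ⟨1 + Cq + 2 * Cq * (4 * Cq ^ 2 + 16 * Cq ^ 3 * Δoc) * (1 + Δoc) / t, by positivity, ?_⟩
  intro X _ _ e f hef hQG nseq hmono _ hOC x k A hcard hA
  exact IsQuasiGreedy.norm_sub_proj_le hef hQG hCq.le hOC hΔoc.le hmono.tendsto_atTop ht0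
    hcard hA

/-- If a basis is quasi-greedy with constant `Cq` and
`𝐧`-order-conservative with constant `Δoc`, then for every `0 < t ≤ 1` it is
`𝐧`-`t`-partially greedy: there is a constant `C` depending only on `t`, `Cq`, `Δoc`
(and the scalar field, here ℝ) such that `‖x − P_A(x)‖ ≤ C‖x − S_n(x)‖` for every `x`,
every `n ∈ 𝐧`, and every `t`-greedy set `A` for `x` with `|A| = n`. -/
theorem stmt16 (t Cq Δoc : ℝ) (ht0 : 0 < t) (ht1 : t ≤ 1) (hCq : 0 < Cq) (hΔoc : 0 < Δoc) :
    ∃ C : ℝ, 0 < C ∧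
      ∀ (X : Type) [NormedAddCommGroup X] [NormedSpace ℝ X],
        ∀ (e : ℕ → X) (f : ℕ → X →L[ℝ] ℝ),
          (∀ i j, f i (e j) = if i = j then (1 : ℝ) else 0) →
          -- quasi-greedy with constant Cq
          (∀ (x : X) (A : Finset ℕ),
            (∀ i ∈ A, ∀ j ∉ A, |f j x| ≤ |f i x|) →
            ‖∑ i ∈ A, f i x • e i‖ ≤ Cq * ‖x‖) →
          ∀ (nseq : ℕ → ℕ), StrictMono nseq → 0 < nseq 0 →
            -- 𝐧-order-conservative with constant Δoc
            (∀ (A B : Finset ℕ), A.card = B.card →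
              (∃ k, A ⊆ Finset.range (nseq k) ∧ ∀ j ∈ B, nseq k ≤ j) →
              ‖∑ i ∈ A, e i‖ ≤ Δoc * ‖∑ i ∈ B, e i‖) →
            ∀ (x : X) (k : ℕ) (A : Finset ℕ), A.card = nseq k →
              (∀ i ∈ A, ∀ j ∉ A, t * |f j x| ≤ |f i x|) →
              ‖x - ∑ i ∈ A, f i x • e i‖ ≤
                C * ‖x - ∑ i ∈ Finset.range (nseq k), f i x • e i‖ :=
  stmt16_general t Cq Δoc ht0 hCq hΔoc
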